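/- Let M ∈ ℝ^{m×n} and S ∈ ℝ^{d×m} with rank(SM) = rank(M) = k. Let the sketch SM have a decomposition SM = Q̂ R̂ with Q̂ ∈ ℝ^{d×k} of orthonormal columns and R̂ ∈ ℝ^{k×n}, and suppose A := R̂[:, 1:k] (the leading k×k block) is invertible. Define the preconditioned matrix Mᵖ := M[:, 1:k] A⁻¹. Then M = Mᵖ R̂, i.e., the truncated preconditioned factorization exactly reconstructs M. -/

import Mathlib

open Matrix BigOperators

theorem Matrix.isHermitian_transpose_mul_self {m n α : Type*} [CommSemiring α] [StarRing α]
    [TrivialStar α] [Fintype m] (A : Matrix m n α) : (Aᵀ * A).IsHermitian := by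
  rw [IsHermitian, conjTranspose_eq_transpose_of_trivial, transpose_mul, transpose_transpose]

noncomputable def sval {m n : ℕ} (A : Matrix (Fin m) (Fin n) ℝ) (j : Fin n) : ℝ :=
  Real.sqrt ((Matrix.isHermitian_transpose_mul_self A).eigenvalues
    (Tuple.sort (Matrix.isHermitian_transpose_mul_self A).eigenvalues j.rev))

noncomputable def specNorm {m n : ℕ} (A : Matrix (Fin m) (Fin n) ℝ) : ℝ :=
  sSup (Set.range (sval A))

noncomputable def sMin {m n : ℕ} (A : Matrix (Fin m) (Fin n) ℝ) : ℝ :=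
  sInf (Set.range (sval A))

noncomputable def frob {m n : ℕ} (A : Matrix (Fin m) (Fin n) ℝ) : ℝ :=
  Real.sqrt (∑ i, ∑ j, (A i j)^2)

noncomputable def enorm {m : ℕ} (x : Fin m → ℝ) : ℝ := Real.sqrt (∑ i, (x i)^2)

def UpperTri {k n : ℕ} (R : Matrix (Fin k) (Fin n) ℝ) : Prop :=
  ∀ (i : Fin k) (j : Fin n), (j : ℕ) < (i : ℕ) → R i j = 0

def lead {k n : ℕ} (R : Matrix (Fin k) (Fin n) ℝ) (ℓ : ℕ) (h1 : ℓ ≤ k) (h2 : ℓ ≤ n) :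
    Matrix (Fin ℓ) (Fin ℓ) ℝ := fun i j => R (Fin.castLE h1 i) (Fin.castLE h2 j)

def topRight {k n : ℕ} (R : Matrix (Fin k) (Fin n) ℝ) (ℓ : ℕ) (h1 : ℓ ≤ k) :
    Matrix (Fin ℓ) (Fin (n - ℓ)) ℝ :=
  fun i j => R (Fin.castLE h1 i) ⟨ℓ + j.1, by have := j.isLt; omega⟩

def trail {k n : ℕ} (R : Matrix (Fin k) (Fin n) ℝ) (ℓ : ℕ) :
    Matrix (Fin (k - ℓ)) (Fin (n - ℓ)) ℝ :=
  fun i j => R ⟨ℓ + i.1, by have := i.isLt; omega⟩ ⟨ℓ + j.1, by have := j.isLt; omega⟩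

/-!
Rank-nullity turns `rank (S * M) = rank M` into `ker (S * M) = ker M`, so an identity `M * X = M * Y`
may be checked after multiplying by the sketching matrix `S`. Writing `P` for the selector of the first
`k` columns, `R * P = A` gives `S * M * (P * A⁻¹ * R) = Q * A * A⁻¹ * R = S * M`, hence
`M = M * P * A⁻¹ * R`.
-/

namespace Matrix

variable {K l m n o : Type*} [Field K] [Fintype m] [Fintype n]

theorem ker_mulVecLin_mul_eq_of_rank_eq {S : Matrix l m K} {M : Matrix m n K}
    (h : (S * M).rank = M.rank) : LinearMap.ker (S * M).mulVecLin = LinearMap.ker M.mulVecLin := by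
  refine (Submodule.eq_of_le_of_finrank_eq ?_ ?_).symm
  · rw [mulVecLin_mul]
    exact LinearMap.ker_le_ker_comp _ _
  · have hSM := (S * M).mulVecLin.finrank_range_add_finrank_ker
    have hM := M.mulVecLin.finrank_range_add_finrank_ker
    unfold rank at h
    omega

theorem mul_eq_mul_of_rank_mul_eq [Fintype o] [DecidableEq o] {S : Matrix l m K} {M : Matrix m n K}
    (h : (S * M).rank = M.rank) {X Y : Matrix n o K} (hXY : S * M * X = S * M * Y) :
    M * X = M * Y := by
  refine ext_of_mulVec_single fun j => ?_
  have hker : X *ᵥ Pi.single j 1 - Y *ᵥ Pi.single j 1 ∈ LinearMap.ker (S * M).mulVecLin := by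
    rw [LinearMap.mem_ker, mulVecLin_apply, mulVec_sub, mulVec_mulVec, mulVec_mulVec, hXY,
      sub_self]
  rw [ker_mulVecLin_mul_eq_of_rank_eq h, LinearMap.mem_ker, mulVecLin_apply, mulVec_sub,
    sub_eq_zero] at hker
  simpa only [mulVec_mulVec] using hker

end Matrix

theorem cqrrpt_exact_correctness_general {m n d k : ℕ} (hkn : k ≤ n)
    (M : Matrix (Fin m) (Fin n) ℝ) (S : Matrix (Fin d) (Fin m) ℝ)
    (hrank : (S * M).rank = M.rank)
    (Q : Matrix (Fin d) (Fin k) ℝ) (R : Matrix (Fin k) (Fin n) ℝ)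
    (hdecomp : S * M = Q * R)
    (hA : IsUnit (R.submatrix id (Fin.castLE hkn)).det) :
    M = (M.submatrix id (Fin.castLE hkn) * (R.submatrix id (Fin.castLE hkn))⁻¹) * R := by
  set A := R.submatrix id (Fin.castLE hkn)
  set P := (1 : Matrix (Fin n) (Fin n) ℝ).submatrix id (Fin.castLE hkn)
  have hcols {a : ℕ} (N : Matrix (Fin a) (Fin n) ℝ) : N * P = N.submatrix id (Fin.castLE hkn) :=
    mul_submatrix_one (Equiv.refl _) _ N
  have hsketch : S * M * (P * A⁻¹ * R) = S * M * (1 : Matrix (Fin n) (Fin n) ℝ) := by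
    rw [hdecomp, Matrix.mul_one]
    calc Q * R * (P * A⁻¹ * R) = Q * (R * P * A⁻¹) * R := by simp only [Matrix.mul_assoc]
      _ = Q * R := by rw [hcols, mul_nonsing_inv A hA, Matrix.mul_one]
  calc M = M * (P * A⁻¹ * R) := by rw [mul_eq_mul_of_rank_mul_eq hrank hsketch, Matrix.mul_one]
    _ = M.submatrix id (Fin.castLE hkn) * A⁻¹ * R := by
      rw [← hcols M]
      simp only [Matrix.mul_assoc]

theorem cqrrpt_exact_correctness {m n d k : ℕ} (hkn : k ≤ n)
    (M : Matrix (Fin m) (Fin n) ℝ) (S : Matrix (Fin d) (Fin m) ℝ)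
    (hrank : (S * M).rank = M.rank) (hk : M.rank = k)
    (Q : Matrix (Fin d) (Fin k) ℝ) (R : Matrix (Fin k) (Fin n) ℝ)
    (hdecomp : S * M = Q * R) (hQ : Qᵀ * Q = 1)
    (hA : IsUnit (R.submatrix id (Fin.castLE hkn)).det) :
    M = (M.submatrix id (Fin.castLE hkn) * (R.submatrix id (Fin.castLE hkn))⁻¹) * R :=
  cqrrpt_exact_correctness_general hkn M S hrank Q R hdecomp hA
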